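/- Let θ : 𝔻 → ℂ be holomorphic with |θ| ≤ 1 and θ(0) = 0, and let μ be the Clark measure with parameter γ = 1, i.e. ∫(ξ+z)/(ξ−z) dμ(ξ) = (1+θ(z))/(1−θ(z)). Then θ(z) = z · 𝒞_{ξ̄μ}(z) for all z ∈ 𝔻, where 𝒞_{ξ̄μ} = K(ξ̄μ)/Kμ is the normalized Cauchy transform of the function ξ ↦ ξ̄ with respect to μ. -/

import Mathlib

/-!
Splitting the Herglotz kernel as `(ξ + z)/(ξ - z) = 2 (1 - ξ̄z)⁻¹ - 1` turns the hypothesis into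
`2 Kμ(z) - 1 = (1 + θ z)/(1 - θ z)`, i.e. `Kμ(z) = (1 - θ z)⁻¹`; this is a genuine identity and
not a junk value because `Re Kμ(z) > 1/2` on the disc, which rules out `θ z = 1`. On the other
hand `z ξ̄/(1 - ξ̄z) = (1 - ξ̄z)⁻¹ - 1` gives `z K(ξ̄μ)(z) = Kμ(z) - 1`, so
`z K(ξ̄μ)(z)/Kμ(z) = 1 - 1/Kμ(z) = θ z`.
-/

open MeasureTheory Metric Complex

noncomputable instance : MeasurableSpace Circle := borel Circle
instance : BorelSpace Circle := ⟨rfl⟩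

open ComplexConjugate

lemma lt_integral_of_forall_lt {α : Type*} [MeasurableSpace α] {μ : Measure α}
    [IsProbabilityMeasure μ] {f : α → ℝ} {c : ℝ} (hf : Integrable f μ) (h : ∀ x, c < f x) :
    c < ∫ x, f x ∂μ := by
  have hpos : 0 < ∫ x, (f x - c) ∂μ := by
    rw [integral_pos_iff_support_of_nonneg (fun x => (sub_pos.2 (h x)).le)
      (hf.sub (integrable_const c))]
    have hsupp : Function.support (fun x => f x - c) = Set.univ :=
      Set.eq_univ_of_forall fun x => sub_ne_zero.2 (h x).ne'
    rw [hsupp, measure_univ]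
    exact one_pos
  rw [integral_sub hf (integrable_const c), integral_const] at hpos
  simpa using hpos

lemma one_half_lt_re_inv_one_sub {w : ℂ} (hw : ‖w‖ < 1) : 1 / 2 < ((1 - w)⁻¹).re := by
  have hw1 : 1 - w ≠ 0 := sub_ne_zero.2 fun h => by simp [← h] at hw
  have hsq : w.re * w.re + w.im * w.im < 1 := by
    rw [← normSq_apply, ← Complex.sq_norm]
    nlinarith [norm_nonneg w]
  rw [inv_re, lt_div_iff₀ (normSq_pos.2 hw1), normSq_apply]
  simp only [sub_re, one_re, sub_im, one_im]
  nlinarith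

namespace Circle

lemma norm_conj_mul (ξ : Circle) (z : ℂ) : ‖conj (ξ : ℂ) * z‖ = ‖z‖ := by
  simp [Circle.norm_coe]

lemma one_sub_conj_mul_ne_zero (ξ : Circle) {z : ℂ} (hz : ‖z‖ < 1) :
    1 - conj (ξ : ℂ) * z ≠ 0 :=
  sub_ne_zero.2 fun h => by simpa [← h] using (norm_conj_mul ξ z).trans_lt hz

lemma add_div_sub_eq_two_mul_inv_sub_one (ξ : Circle) {z : ℂ} (hz : ‖z‖ < 1) :
    ((ξ : ℂ) + z) / ((ξ : ℂ) - z) = 2 * (1 - conj (ξ : ℂ) * z)⁻¹ - 1 := by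
  have hξ : conj (ξ : ℂ) * ξ = 1 := by simp [← Circle.coe_inv_eq_conj]
  have hξz : (ξ : ℂ) - z ≠ 0 := sub_ne_zero.2 fun h => by simp [← h, Circle.norm_coe] at hz
  have hzξ : 1 - z * conj (ξ : ℂ) ≠ 0 := by
    rw [mul_comm]
    exact one_sub_conj_mul_ne_zero ξ hz
  field_simp
  linear_combination (-2 * z) * hξ

end Circle

section CauchyTransform

variable (μ : Measure Circle)

noncomputable def cauchyTransform (f : Circle → ℂ) (z : ℂ) : ℂ :=
  ∫ ξ, f ξ / (1 - conj (ξ : ℂ) * z) ∂μ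

lemma integrable_inv_one_sub_conj_mul [IsFiniteMeasure μ] {z : ℂ} (hz : ‖z‖ < 1) :
    Integrable (fun ξ : Circle => (1 - conj (ξ : ℂ) * z)⁻¹) μ := by
  have hcont : Continuous fun ξ : Circle => (1 - conj (ξ : ℂ) * z)⁻¹ :=
    (by fun_prop : Continuous fun ξ : Circle => 1 - conj (ξ : ℂ) * z).inv₀
      fun ξ => Circle.one_sub_conj_mul_ne_zero ξ hz
  exact hcont.integrable_of_hasCompactSupport (.of_compactSpace _)

lemma integral_add_div_sub_eq_cauchyTransform [IsProbabilityMeasure μ] {z : ℂ} (hz : ‖z‖ < 1) :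
    ∫ ξ, ((ξ : ℂ) + z) / ((ξ : ℂ) - z) ∂μ = 2 * cauchyTransform μ 1 z - 1 := by
  simp_rw [Circle.add_div_sub_eq_two_mul_inv_sub_one _ hz]
  rw [integral_sub ((integrable_inv_one_sub_conj_mul μ hz).const_mul 2) (integrable_const 1),
    integral_const_mul]
  simp [cauchyTransform]

lemma mul_cauchyTransform_conj [IsProbabilityMeasure μ] {z : ℂ} (hz : ‖z‖ < 1) :
    z * cauchyTransform μ (fun ξ => conj (ξ : ℂ)) z = cauchyTransform μ 1 z - 1 := by
  have hpt (ξ : Circle) : z * (conj (ξ : ℂ) / (1 - conj (ξ : ℂ) * z)) =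
      (1 - conj (ξ : ℂ) * z)⁻¹ - 1 := by
    rw [← mul_div_assoc, mul_comm z, eq_sub_iff_add_eq,
      div_add_one (Circle.one_sub_conj_mul_ne_zero ξ hz), add_sub_cancel, one_div]
  rw [cauchyTransform, ← integral_const_mul]
  simp_rw [hpt]
  rw [integral_sub (integrable_inv_one_sub_conj_mul μ hz) (integrable_const 1)]
  simp [cauchyTransform]

lemma one_half_lt_re_cauchyTransform_one [IsProbabilityMeasure μ] {z : ℂ} (hz : ‖z‖ < 1) :
    1 / 2 < (cauchyTransform μ 1 z).re := by
  simp only [cauchyTransform, Pi.one_apply, one_div (1 - _ : ℂ)]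
  rw [← RCLike.re_to_complex, ← integral_re (integrable_inv_one_sub_conj_mul μ hz)]
  exact lt_integral_of_forall_lt (integrable_inv_one_sub_conj_mul μ hz).re
    fun ξ => one_half_lt_re_inv_one_sub ((Circle.norm_conj_mul ξ z).trans_lt hz)

end CauchyTransform

theorem stmt11_general (θ : ℂ → ℂ)
    (μ : Measure Circle) [IsProbabilityMeasure μ]
    (hHerglotz : ∀ z ∈ ball (0 : ℂ) 1,
      ∫ ξ : Circle, ((ξ : ℂ) + z) / ((ξ : ℂ) - z) ∂μ = (1 + θ z) / (1 - θ z)) :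
    ∀ z ∈ ball (0 : ℂ) 1,
      θ z = z * (∫ ξ : Circle, (starRingEnd ℂ) (ξ : ℂ) /
          (1 - (starRingEnd ℂ) (ξ : ℂ) * z) ∂μ) /
        (∫ ξ : Circle, (1 - (starRingEnd ℂ) (ξ : ℂ) * z)⁻¹ ∂μ) := by
  intro z hz
  have hz' : ‖z‖ < 1 := mem_ball_zero_iff.1 hz
  have hK : ∫ ξ : Circle, (1 - conj (ξ : ℂ) * z)⁻¹ ∂μ = cauchyTransform μ 1 z := by
    simp only [cauchyTransform, Pi.one_apply, one_div]
  have hKre := one_half_lt_re_cauchyTransform_one μ hz'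
  have hCayley : 2 * cauchyTransform μ 1 z - 1 = (1 + θ z) / (1 - θ z) :=
    (integral_add_div_sub_eq_cauchyTransform μ hz').symm.trans (hHerglotz z hz)
  rw [hK, ← cauchyTransform, mul_cauchyTransform_conj μ hz']
  generalize cauchyTransform μ 1 z = K at hKre hCayley ⊢
  have hθ : 1 - θ z ≠ 0 := by
    intro h
    rw [h, div_zero, sub_eq_zero] at hCayley
    have := congrArg re hCayley
    norm_num at this
    linarith
  have hK0 : K ≠ 0 := by
    rintro rfl
    norm_num at hKre
  field_simp at hCayley ⊢
  linear_combination (-1 / 2) * hCayley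

/-- Let `θ` be a Schur function with `θ(0) = 0` and let `μ` be its Clark
measure with parameter `γ = 1`, i.e. `∫ (ξ+z)/(ξ−z) dμ(ξ) = (1+θ(z))/(1−θ(z))` on `𝔻`. Then
`θ(z) = z · K(ξ̄μ)(z)/Kμ(z)` for all `z ∈ 𝔻` (normalized Cauchy transform of `ξ̄`). -/
theorem stmt11 (θ : ℂ → ℂ) (hθd : DifferentiableOn ℂ θ (ball 0 1))
    (hθ1 : ∀ z ∈ ball (0 : ℂ) 1, ‖θ z‖ ≤ 1) (hθ0 : θ 0 = 0)
    (μ : Measure Circle) [IsProbabilityMeasure μ]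
    (hHerglotz : ∀ z ∈ ball (0 : ℂ) 1,
      ∫ ξ : Circle, ((ξ : ℂ) + z) / ((ξ : ℂ) - z) ∂μ = (1 + θ z) / (1 - θ z)) :
    ∀ z ∈ ball (0 : ℂ) 1,
      θ z = z * (∫ ξ : Circle, (starRingEnd ℂ) (ξ : ℂ) /
          (1 - (starRingEnd ℂ) (ξ : ℂ) * z) ∂μ) /
        (∫ ξ : Circle, (1 - (starRingEnd ℂ) (ξ : ℂ) * z)⁻¹ ∂μ) :=
  stmt11_general θ μ hHerglotz
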